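/- Reduction of KP to the n-KdV bilinear identities: Let n ≥ 2 and let τ be a polynomial in t = (t_1, t_2, …) that is a tau-function of the KP hierarchy and satisfies ∂τ/∂t_{jn} = 0 for all integers j ≥ 1. Then for every integer j ≥ 0 the coefficient of z^{−1} in z^{jn} · τ(t − [z^{−1}]) · τ(y + [z^{−1}]) · exp(Σ_{i≥1}(t_i − y_i) z^i) vanishes identically in t and y (the diagonal case k = ℓ of the first formulation of the n-KdV hierarchy). -/

import Mathlib

open MvPolynomial

/-- The elementary Schur polynomial `s_n(t)` in variables `t = (t_1, t_2, …)`, where the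
variable `X k` of `MvPolynomial ℕ ℂ` stands for `t_{k+1}`.  It is the coefficient of `z^n` in
`exp (∑_{k ≥ 1} t_k z^k)`; only the terms `t_1 z, …, t_n z^n` and the powers `m ≤ n` of the
exponential series contribute to this coefficient. -/
noncomputable def schur (n : ℕ) : MvPolynomial ℕ ℂ :=
  ∑ m ∈ Finset.range (n + 1), (m.factorial : ℂ)⁻¹ •
    (PowerSeries.coeff (R := MvPolynomial ℕ ℂ) n)
      ((∑ k ∈ Finset.range n,
        PowerSeries.monomial (R := MvPolynomial ℕ ℂ) (k + 1) (MvPolynomial.X k)) ^ m)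

/-- `s_j` for `j ∈ ℤ`, with `s_j = 0` for `j < 0`. -/
noncomputable def schurZ (j : ℤ) : MvPolynomial ℕ ℂ :=
  if 0 ≤ j then schur j.toNat else 0

/-- `s_j(t + c)`: the elementary Schur polynomial with argument shifted by the complex
sequence `c` (where `c k` stands for `c_{k+1}`). -/
noncomputable def schurShift (j : ℤ) (c : ℕ → ℂ) : MvPolynomial ℕ ℂ :=
  MvPolynomial.aeval (fun k : ℕ => MvPolynomial.X k + MvPolynomial.C (c k)) (schurZ j)

/-- `τ(t - [z⁻¹])` as a polynomial in `w = z⁻¹` with coefficients in the ring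
`ℂ[t, y] = MvPolynomial (ℕ ⊕ ℕ) ℂ` (the `Sum.inl` variables are the `t`'s, the `Sum.inr`
variables are the `y`'s): substitute `t_i - w^i / i` for `t_i`. -/
noncomputable def tSub (τ : MvPolynomial ℕ ℂ) : Polynomial (MvPolynomial (ℕ ⊕ ℕ) ℂ) :=
  MvPolynomial.aeval (fun k : ℕ =>
    Polynomial.C (MvPolynomial.X (Sum.inl k)) -
      Polynomial.C (MvPolynomial.C ((k + 1 : ℂ)⁻¹)) * Polynomial.X ^ (k + 1 : ℕ)) τ

/-- `τ(y + [z⁻¹])` as a polynomial in `w = z⁻¹`: substitute `y_i + w^i / i` for `t_i`. -/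
noncomputable def ySub (τ : MvPolynomial ℕ ℂ) : Polynomial (MvPolynomial (ℕ ⊕ ℕ) ℂ) :=
  MvPolynomial.aeval (fun k : ℕ =>
    Polynomial.C (MvPolynomial.X (Sum.inr k)) +
      Polynomial.C (MvPolynomial.C ((k + 1 : ℂ)⁻¹)) * Polynomial.X ^ (k + 1 : ℕ)) τ

/-- `s_n(t - y)` in `ℂ[t, y]`. -/
noncomputable def expFactor (n : ℕ) : MvPolynomial (ℕ ⊕ ℕ) ℂ :=
  MvPolynomial.aeval (fun k : ℕ => MvPolynomial.X (Sum.inl k) - MvPolynomial.X (Sum.inr k))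
    (schur n)

/-- The pair `(τ', τ)` satisfies the `m`-th modified KP bilinear identity: the coefficient of
`z^{-1}` in `z^m · τ'(t - [z⁻¹]) · τ(y + [z⁻¹]) · exp (∑ (t_i - y_i) z^i)` vanishes.
Writing `P(w) = τ'(t - [z⁻¹]) · τ(y + [z⁻¹])` as a polynomial in `w = z⁻¹` and
`exp (∑ (t_i - y_i) z^i) = ∑_{n ≥ 0} s_n(t - y) z^n`, this coefficient is the (finite) sum
`∑_{n ≥ 0} s_n(t - y) · P.coeff (n + m + 1)`; all terms with `n > P.natDegree` vanish. -/
def MKPPair (m : ℕ) (τ' τ : MvPolynomial ℕ ℂ) : Prop :=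
  ∑ n ∈ Finset.range ((tSub τ' * ySub τ).natDegree + 1),
    expFactor n * (tSub τ' * ySub τ).coeff (n + m + 1) = 0

/-- `τ` is a tau-function of the KP hierarchy. -/
def IsKPTau (τ : MvPolynomial ℕ ℂ) : Prop := MKPPair 0 τ τ

/-- `τ_λ(t; c_1, …, c_k) = det (s_{λ_i + j - i}(t + c_i))_{1 ≤ i,j ≤ k}` (0-based indices:
the `(i,j)` entry is `s_{λ_{i+1} + (j+1) - (i+1)}(t + c_{i+1})`). -/
noncomputable def tauLambda (k : ℕ) (lam : Fin k → ℕ) (c : Fin k → ℕ → ℂ) :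
    MvPolynomial ℕ ℂ :=
  Matrix.det (Matrix.of fun i j : Fin k =>
    schurShift ((lam i : ℤ) + (j : ℕ) - (i : ℕ)) (c i))

/-- The `t_1`-Wronskian `det (∂^{i-1} f_j / ∂t_1^{i-1})` of a finite family of polynomials. -/
noncomputable def wronskianFin (k : ℕ) (f : Fin k → MvPolynomial ℕ ℂ) : MvPolynomial ℕ ℂ :=
  Matrix.det (Matrix.of fun i j : Fin k =>
    (fun p => MvPolynomial.pderiv 0 p)^[(i : ℕ)] (f j))

/-- The `t_1`-Wronskian of a list of polynomials, in the order of the list. -/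
noncomputable def wronskianList (L : List (MvPolynomial ℕ ℂ)) : MvPolynomial ℕ ℂ :=
  wronskianFin L.length fun j => L.get j


section KPAux

/-- Chain rule for a derivation applied to an `aeval` where all but one substituted
value is killed by the derivation. -/
lemma deriv_aeval_eq {A M : Type*} [CommRing A] [Algebra ℂ A] [AddCommGroup M]
    [Module A M] [Module ℂ M] (d : Derivation ℂ A M) (f : ℕ → A) (v : ℕ)
    (hf : ∀ k, k ≠ v → d (f k) = 0) (p : MvPolynomial ℕ ℂ) :
    d (aeval f p) = aeval f (pderiv v p) • d (f v) := by
  induction p using MvPolynomial.induction_on with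
  | C a => simp
  | add p q hp hq => simp [map_add, hp, hq, add_smul]
  | mul_X p i hp =>
    rw [map_mul, Derivation.leibniz, hp, pderiv_mul, map_add, map_mul, map_mul, aeval_X]
    by_cases hiv : i = v
    · subst hiv
      rw [pderiv_X_self]
      simp [add_smul, smul_smul, mul_comm]
      abel
    · rw [pderiv_X_of_ne (by simpa using hiv), hf i hiv]
      simp [add_smul, smul_smul, mul_comm]

/-- The polynomial version of the series `∑ t_{k+1} z^{k+1}` truncated to `N` terms. -/
noncomputable def FP (N : ℕ) : Polynomial (MvPolynomial ℕ ℂ) :=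
  ∑ k ∈ Finset.range N, Polynomial.monomial (k + 1) (MvPolynomial.X k)

lemma FP_coe (N : ℕ) : ((FP N : Polynomial (MvPolynomial ℕ ℂ)) : PowerSeries (MvPolynomial ℕ ℂ))
    = ∑ k ∈ Finset.range N, PowerSeries.monomial (R := MvPolynomial ℕ ℂ) (k + 1) (MvPolynomial.X k) := by
  rw [show ((FP N : Polynomial (MvPolynomial ℕ ℂ)) : PowerSeries (MvPolynomial ℕ ℂ))
      = Polynomial.coeToPowerSeries.ringHom (FP N) from rfl, FP, map_sum]
  simp [Polynomial.coe_monomial]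

lemma schur_eq (n : ℕ) :
    schur n = ∑ m ∈ Finset.range (n + 1), (m.factorial : ℂ)⁻¹ • ((FP n ^ m).coeff n) := by
  unfold schur
  congr 1
  ext m
  congr 1
  rw [← Polynomial.coeff_coe, Polynomial.coe_pow, FP_coe]

lemma FP_coeff (N i : ℕ) :
    (FP N).coeff i = if 1 ≤ i ∧ i ≤ N then MvPolynomial.X (i - 1) else 0 := by
  rw [FP, Polynomial.finset_sum_coeff]
  simp only [Polynomial.coeff_monomial]
  cases i with
  | zero => simp
  | succ j =>
    simp only [add_left_inj]
    rw [Finset.sum_ite_eq' (Finset.range N) j (fun k => MvPolynomial.X k)]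
    simp only [Finset.mem_range, Nat.add_sub_cancel, Nat.lt_iff_add_one_le, Nat.le_add_left, true_and]

lemma FP_pow_coeff_zero (N m : ℕ) : ∀ d, d < m → (FP N ^ m).coeff d = 0 := by
  induction m with
  | zero => omega
  | succ m ih =>
    intro d hd
    rw [pow_succ, Polynomial.coeff_mul]
    apply Finset.sum_eq_zero
    rintro ⟨x1, x2⟩ hx
    rw [Finset.HasAntidiagonal.mem_antidiagonal] at hx
    rcases Nat.eq_zero_or_pos x2 with h2 | h2
    · rw [h2, FP_coeff]; simp
    · rw [ih x1 (by omega), zero_mul]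

lemma pow_coeff_congr {p q : Polynomial (MvPolynomial ℕ ℂ)} {d : ℕ}
    (h : ∀ i ≤ d, p.coeff i = q.coeff i) (m : ℕ) :
    ∀ e ≤ d, (p ^ m).coeff e = (q ^ m).coeff e := by
  induction m with
  | zero => intro e he; rfl
  | succ m ih =>
    intro e he
    rw [pow_succ, pow_succ, Polynomial.coeff_mul, Polynomial.coeff_mul]
    apply Finset.sum_congr rfl
    rintro ⟨x1, x2⟩ hx
    rw [Finset.HasAntidiagonal.mem_antidiagonal] at hx
    rw [ih x1 (by omega), h x2 (by omega)]

lemma FP_stable (N1 N2 m d : ℕ) (h1 : d ≤ N1) (h2 : d ≤ N2) :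
    (FP N1 ^ m).coeff d = (FP N2 ^ m).coeff d := by
  refine pow_coeff_congr (fun i hi => ?_) m d le_rfl
  rw [FP_coeff, FP_coeff]
  by_cases h : 1 ≤ i
  · rw [if_pos ⟨h, by omega⟩, if_pos ⟨h, by omega⟩]
  · rw [if_neg (by omega), if_neg (by omega)]

lemma mapCoeffs_FP (v N : ℕ) :
    (pderiv (R := ℂ) v).mapCoeffs (FP N) =
      if v < N then PolynomialModule.single (MvPolynomial ℕ ℂ) (v + 1) 1 else 0 := by
  rw [FP, map_sum]
  rw [Finset.sum_congr rfl (fun k _ => Derivation.mapCoeffs_monomial _ _ _)]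
  have : ∀ k ∈ Finset.range N,
      PolynomialModule.single (MvPolynomial ℕ ℂ) (k + 1) ((pderiv (R := ℂ) v) (X k)) =
      if k = v then PolynomialModule.single (MvPolynomial ℕ ℂ) (k + 1) 1 else 0 := by
    intro k _
    by_cases hk : k = v
    · subst hk; simp [pderiv_X_self]
    · rw [if_neg hk, pderiv_X_of_ne (by simpa using hk)]
      simp only [PolynomialModule.single_zero]
  rw [Finset.sum_congr rfl this, Finset.sum_ite_eq' (Finset.range N) v
      (fun k => PolynomialModule.single (MvPolynomial ℕ ℂ) (k + 1) 1)]
  simp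

lemma pderiv_FP_pow_coeff (v N m d : ℕ) (hvN : v < N) :
    pderiv (R := ℂ) v ((FP N ^ m).coeff d) =
      m • (if v + 1 ≤ d then (FP N ^ (m - 1)).coeff (d - (v + 1)) else 0) := by
  have h1 : pderiv (R := ℂ) v ((FP N ^ m).coeff d)
      = ((pderiv (R := ℂ) v).mapCoeffs (FP N ^ m)).coeff d := rfl
  rw [h1, Derivation.leibniz_pow, mapCoeffs_FP, if_pos hvN]
  rw [show ∀ x : PolynomialModule (MvPolynomial ℕ ℂ) (MvPolynomial ℕ ℂ), (m • x).coeff d = m • x.coeff d from fun x => rfl]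
  congr 1
  rw [PolynomialModule.smul_single_apply]
  split_ifs with h
  · rw [smul_eq_mul, mul_one]
  · rfl

lemma pderiv_FP_pow_coeff_zero (v N m d : ℕ) (hvN : N ≤ v) :
    pderiv (R := ℂ) v ((FP N ^ m).coeff d) = 0 := by
  have h1 : pderiv (R := ℂ) v ((FP N ^ m).coeff d)
      = ((pderiv (R := ℂ) v).mapCoeffs (FP N ^ m)).coeff d := rfl
  rw [h1, Derivation.leibniz_pow, mapCoeffs_FP, if_neg (by omega)]
  simp

lemma schur_pderiv (v n : ℕ) :
    pderiv (R := ℂ) v (schur n) = if v < n then schur (n - (v + 1)) else 0 := by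
  rw [schur_eq, map_sum]
  by_cases hv : v < n
  · rw [if_pos hv]
    set d := n - (v + 1) with hd
    have hdn : d ≤ n := by omega
    have hdn' : d + 1 ≤ n := by omega
    calc ∑ m ∈ Finset.range (n + 1), pderiv (R := ℂ) v ((m.factorial : ℂ)⁻¹ • (FP n ^ m).coeff n)
        = ∑ m ∈ Finset.range (n + 1),
            (m.factorial : ℂ)⁻¹ • (m • (FP n ^ (m - 1)).coeff d) := by
          apply Finset.sum_congr rfl
          intro m _
          rw [Derivation.map_smul, pderiv_FP_pow_coeff v n m n hv, if_pos (by omega)]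
      _ = ∑ m ∈ Finset.range n, (m.factorial : ℂ)⁻¹ • (FP n ^ m).coeff d := by
          rw [Finset.sum_range_succ' (fun m => (m.factorial : ℂ)⁻¹ • (m • (FP n ^ (m - 1)).coeff d))]
          simp only [Nat.factorial_zero, Nat.cast_one, inv_one, zero_smul, smul_zero, add_zero]
          apply Finset.sum_congr rfl
          intro m _
          rw [Nat.add_sub_cancel, ← Nat.cast_smul_eq_nsmul ℂ, smul_smul]
          congr 1
          have h1 : ((m + 1 : ℕ) : ℂ) ≠ 0 := by exact_mod_cast Nat.succ_ne_zero m
          have h2 : ((m.factorial : ℕ) : ℂ) ≠ 0 := by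
            exact_mod_cast Nat.factorial_ne_zero m
          rw [Nat.factorial_succ, Nat.cast_mul, mul_inv]
          field_simp
      _ = ∑ m ∈ Finset.range (d + 1), (m.factorial : ℂ)⁻¹ • (FP d ^ m).coeff d := by
          rw [← Finset.sum_subset (Finset.range_subset_range.mpr hdn')]
          · apply Finset.sum_congr rfl
            intro m _
            rw [FP_stable d n m d le_rfl hdn]
          · intro m _ hm
            rw [FP_pow_coeff_zero n m d (by simp at hm ⊢; omega), smul_zero]
      _ = schur d := (schur_eq d).symm
  · rw [if_neg hv]
    apply Finset.sum_eq_zero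
    intro m _
    rw [Derivation.map_smul, pderiv_FP_pow_coeff_zero v n m n (by omega), smul_zero]

lemma pderiv_expFactor (v k : ℕ) :
    pderiv (R := ℂ) (Sum.inl v) (expFactor k) =
      if v < k then expFactor (k - (v + 1)) else 0 := by
  rw [expFactor, deriv_aeval_eq _ _ v (fun i hi => by
    rw [map_sub, pderiv_X_of_ne (by simpa using hi), pderiv_X_of_ne (by simp), sub_zero])]
  rw [map_sub, pderiv_X_self, pderiv_X_of_ne (by simp), sub_zero, smul_eq_mul, mul_one,
    schur_pderiv]
  split_ifs with h
  · rfl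
  · exact map_zero _

lemma mapCoeffs_tSub (v : ℕ) (τ : MvPolynomial ℕ ℂ) (hτ : pderiv (R := ℂ) v τ = 0) :
    (pderiv (R := ℂ) (Sum.inl v)).mapCoeffs (tSub τ) = 0 := by
  rw [tSub, deriv_aeval_eq _ _ v (fun k hk => ?_), hτ, map_zero, zero_smul]
  rw [map_sub, Derivation.mapCoeffs_C, pderiv_X_of_ne (by simpa using hk),
    Derivation.leibniz, Derivation.leibniz_pow, Derivation.mapCoeffs_X,
    Derivation.mapCoeffs_C, pderiv_C]
  simp

lemma mapCoeffs_ySub (v : ℕ) (τ : MvPolynomial ℕ ℂ) (hτ : pderiv (R := ℂ) v τ = 0) :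
    (pderiv (R := ℂ) (Sum.inl v)).mapCoeffs (ySub τ) = 0 := by
  rw [ySub, deriv_aeval_eq _ _ v (fun k hk => ?_), hτ, map_zero, zero_smul]
  rw [map_add, Derivation.mapCoeffs_C, pderiv_X_of_ne (by simp),
    Derivation.leibniz, Derivation.leibniz_pow, Derivation.mapCoeffs_X,
    Derivation.mapCoeffs_C, pderiv_C]
  simp

lemma pderiv_coeff_prod (v : ℕ) (τ : MvPolynomial ℕ ℂ) (hτ : pderiv (R := ℂ) v τ = 0)
    (i : ℕ) : pderiv (R := ℂ) (Sum.inl v) ((tSub τ * ySub τ).coeff i) = 0 := by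
  have h1 : pderiv (R := ℂ) (Sum.inl v) ((tSub τ * ySub τ).coeff i)
      = ((pderiv (R := ℂ) (Sum.inl v)).mapCoeffs (tSub τ * ySub τ)).coeff i := rfl
  rw [h1, Derivation.leibniz, mapCoeffs_tSub v τ hτ, mapCoeffs_ySub v τ hτ, smul_zero,
    smul_zero, add_zero]
  rfl

end KPAux

/-- Reduction of KP to the `n`-KdV bilinear identities (diagonal case): if `τ` is a KP
tau-function with `∂τ/∂t_{jn} = 0` for all `j ≥ 1` (the variable `X (jn - 1)` is `t_{jn}`),
then for every `j ≥ 0` the coefficient of `z^{-1}` in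
`z^{jn} · τ(t - [z⁻¹]) · τ(y + [z⁻¹]) · exp (∑ (t_i - y_i) z^i)` vanishes, i.e. the pair
`(τ, τ)` satisfies the `jn`-th modified KP bilinear identity. -/
theorem kp_reduction_to_nkdv (n : ℕ) (hn : 2 ≤ n) (τ : MvPolynomial ℕ ℂ)
    (hkp : IsKPTau τ)
    (hred : ∀ j : ℕ, 1 ≤ j → MvPolynomial.pderiv (j * n - 1) τ = 0)
    (j : ℕ) :
    MKPPair (j * n) τ τ := by
  rcases Nat.eq_zero_or_pos j with rfl | hj
  · rw [show 0 * n = 0 from by omega]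
    exact hkp
  · have hjn : 1 ≤ j * n := Nat.one_le_iff_ne_zero.mpr (by positivity)
    set v := j * n - 1 with hv
    have hm : v + 1 = j * n := by omega
    have hτ : pderiv (R := ℂ) v τ = 0 := hred j hj
    set P := tSub τ * ySub τ with hP
    set N := P.natDegree with hN
    have h1 := congrArg (pderiv (R := ℂ) (Sum.inl v)) hkp
    rw [map_sum, map_zero] at h1
    have h0 : ∑ k ∈ Finset.range (N + 1),
        (if v + 1 ≤ k then expFactor (k - (v + 1)) * P.coeff (k + 1) else 0) = 0 := by
      refine Eq.trans ?_ h1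
      apply Finset.sum_congr rfl
      intro k _
      rw [pderiv_mul, pderiv_coeff_prod v τ hτ, mul_zero, add_zero, pderiv_expFactor]
      by_cases h : v < k
      · rw [if_pos h, if_pos (by omega)]
      · rw [if_neg h, if_neg (by omega), zero_mul]
    have hbig : ∑ k ∈ Finset.range (v + 1 + (N + 1)),
        (if v + 1 ≤ k then expFactor (k - (v + 1)) * P.coeff (k + 1) else 0) =
        ∑ k ∈ Finset.range (N + 1),
        (if v + 1 ≤ k then expFactor (k - (v + 1)) * P.coeff (k + 1) else 0) := by
      symm
      apply Finset.sum_subset (Finset.range_subset_range.mpr (by omega))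
      intro k hk hk'
      simp only [Finset.mem_range] at hk hk'
      by_cases h : v + 1 ≤ k
      · rw [if_pos h, Polynomial.coeff_eq_zero_of_natDegree_lt (by omega), mul_zero]
      · rw [if_neg h]
    have hsplit : ∑ k ∈ Finset.range (v + 1 + (N + 1)),
        (if v + 1 ≤ k then expFactor (k - (v + 1)) * P.coeff (k + 1) else 0) =
        ∑ i ∈ Finset.range (N + 1), expFactor i * P.coeff (i + j * n + 1) := by
      rw [Finset.sum_range_add]
      rw [show ∑ k ∈ Finset.range (v + 1),
          (if v + 1 ≤ k then expFactor (k - (v + 1)) * P.coeff (k + 1) else 0) = 0 from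
        Finset.sum_eq_zero (fun k hk => if_neg (by simp only [Finset.mem_range] at hk; omega)),
        zero_add]
      apply Finset.sum_congr rfl
      intro i _
      rw [if_pos (by omega)]
      have e1 : v + 1 + i - (v + 1) = i := by omega
      have e2 : v + 1 + i + 1 = i + j * n + 1 := by omega
      rw [e1, e2]
    show ∑ i ∈ Finset.range (N + 1), expFactor i * P.coeff (i + j * n + 1) = 0
    rw [← hsplit, hbig]
    exact h0
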